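/- Let G be a graph that has three pairwise distinct non-backtracking walks of the same length h, all from a vertex v to a vertex u. Then G has a nontrivial closed walk of length at most 6h that traverses each edge a net zero number of times and does not reduce to the trivial walk; consequently Abl(G) ≤ 6h. -/

import Mathlib

/-- A multigraph: vertices, edges, and tail/head maps (loops and parallel
edges allowed). -/
structure MGraph where
  V : Type
  E : Type
  tail : E → V
  head : E → V

namespace MGraph

variable (G : MGraph)

/-- Directed edges: an edge together with an orientation. -/
abbrev Dir := G.E × Bool

/-- The tail of a directed edge. -/
def dtail : G.Dir → G.V := fun d => if d.2 then G.tail d.1 else G.head d.1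

/-- The head of a directed edge. -/
def dhead : G.Dir → G.V := fun d => if d.2 then G.head d.1 else G.tail d.1

/-- The inverse (reversal) of a directed edge. -/
def dinv : G.Dir → G.Dir := fun d => (d.1, !d.2)

/-- A walk is a list of directed edges in which the head of each directed edge
is the tail of the next one. -/
def IsWalk (w : List G.Dir) : Prop :=
  w.Chain' (fun a b => G.dhead a = G.dtail b)

/-- A walk is non-backtracking if no directed edge is immediately followed by
its inverse. -/
def NonBack (w : List G.Dir) : Prop :=
  w.Chain' (fun a b => b ≠ G.dinv a)

/-- The starting vertex of a (nonempty) walk. -/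
def wstart (w : List G.Dir) : Option G.V := w.head?.map G.dtail

/-- The terminating vertex of a (nonempty) walk. -/
def wend (w : List G.Dir) : Option G.V := w.getLast?.map G.dhead

/-- A walk is closed if it is nontrivial and its endpoints coincide. -/
def Closed (w : List G.Dir) : Prop := w ≠ [] ∧ G.wstart w = G.wend w

/-- The number of times the directed edge `d` is traversed by the walk `w`. -/
noncomputable def cnt (w : List G.Dir) (d : G.Dir) : ℕ :=
  letI := Classical.decEq G.Dir
  w.count d

/-- A walk is edge neutral if it traverses each edge the same number of times
in each direction. -/
def EdgeNeutral (w : List G.Dir) : Prop :=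
  ∀ e : G.E, G.cnt w (e, true) = G.cnt w (e, false)

/-- The girth: the minimal length of a nontrivial closed non-backtracking
walk (`⊤` if none exists). -/
noncomputable def girth : ℕ∞ :=
  sInf {n : ℕ∞ | ∃ w : List G.Dir,
    G.IsWalk w ∧ G.NonBack w ∧ G.Closed w ∧ n = w.length}

/-- The abelian girth: the minimal length of a nontrivial closed
non-backtracking edge-neutral walk (`⊤` if none exists). -/
noncomputable def ablGirth : ℕ∞ :=
  sInf {n : ℕ∞ | ∃ w : List G.Dir,
    G.IsWalk w ∧ G.NonBack w ∧ G.Closed w ∧ G.EdgeNeutral w ∧ n = w.length}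

/-- The degree of a vertex: the number of directed edges with tail `v`
(so a loop contributes 2). -/
noncomputable def deg (v : G.V) : ℕ := Nat.card {d : G.Dir // G.dtail d = v}

/-- Adjacency via a directed edge. -/
def adj (u v : G.V) : Prop := ∃ d : G.Dir, G.dtail d = u ∧ G.dhead d = v

/-- A graph is connected if it is nonempty and any two vertices are joined by
a walk. -/
def Connected : Prop :=
  Nonempty G.V ∧ ∀ u v : G.V, Relation.ReflTransGen G.adj u v

/-- The Euler characteristic `|V| - |E|`. -/
noncomputable def eulerChar : ℤ := (Nat.card G.V : ℤ) - (Nat.card G.E : ℤ)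

/-- A walk traverses each edge at most once (in either direction). -/
def EdgesDistinct (w : List G.Dir) : Prop :=
  ∀ e : G.E, G.cnt w (e, true) + G.cnt w (e, false) ≤ 1

/-- The edge `e` occurs in the walk `w` (in some direction). -/
def edgeIn (w : List G.Dir) (e : G.E) : Prop := (e, true) ∈ w ∨ (e, false) ∈ w

/-- The vertex `x` is visited by the walk `w`. -/
def vtxIn (w : List G.Dir) (x : G.V) : Prop :=
  (∃ d ∈ w, G.dtail d = x) ∨ (∃ d ∈ w, G.dhead d = x)

/-- A cycle based at `v`: a nontrivial strongly closed non-backtracking walk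
from `v` to `v` traversing each edge at most once. -/
def IsCycleAt (v : G.V) (w : List G.Dir) : Prop :=
  G.IsWalk w ∧ G.NonBack w ∧ G.wstart w = some v ∧ G.wend w = some v ∧
    G.EdgesDistinct w ∧
    (∀ a b : G.Dir, w.head? = some a → w.getLast? = some b → a ≠ G.dinv b)

/-- A path from `u` to `v`: a non-backtracking walk from `u` to `v`
traversing each edge at most once. -/
def IsPathBetween (u v : G.V) (w : List G.Dir) : Prop :=
  G.IsWalk w ∧ G.NonBack w ∧ G.wstart w = some u ∧ G.wend w = some v ∧
    G.EdgesDistinct w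

/-- One elementary reduction step on a walk: deleting a reversal, i.e. an
adjacent pair consisting of a directed edge and its inverse. -/
def RStep (w w' : List G.Dir) : Prop :=
  ∃ (pre suf : List G.Dir) (d : G.Dir),
    w = pre ++ d :: G.dinv d :: suf ∧ w' = pre ++ suf

end MGraph

/-!
Write `a, b, c` for the images of `w₁, w₂, w₃` in the free group on the edges, where they are
distinct reduced words of length `h`. The closed walk `w₁ w₂⁻¹ w₃ w₁⁻¹ w₂ w₃⁻¹` is edge neutral
and represents `p⁻¹ q p q⁻¹` with `p = b a⁻¹`, `q = c a⁻¹`. If this were trivial, `p` and `q`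
would commute, so by Nielsen–Schreier they would be powers of a common `t ≠ 1`, and `a, b, c`
would be `t ^ k * a` for three distinct `k`. Writing `t` as a conjugate of a cyclically reduced
word shows that `k ↦ |t ^ k * a|` grows linearly on both sides of a single minimum, so it takes
each value at most twice. Cancelling backtracks in the walk then yields a non-backtracking closed
edge-neutral walk of length at most `6h`, which is nonempty because its class is nontrivial.
-/

open List Set

theorem Set.InjOn.eq_or_eq_or_eq_of_compl {α β : Type*} {f : α → β} {s : Set α}
    (h₁ : s.InjOn f) (h₂ : sᶜ.InjOn f) {a b c : α} (hab : f a = f b) (hbc : f b = f c) :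
    a = b ∨ b = c ∨ a = c := by
  by_cases ha : a ∈ s <;> by_cases hb : b ∈ s <;> by_cases hc : c ∈ s
  all_goals first
    | exact .inl (h₁ ‹_› ‹_› hab) | exact .inl (h₂ ‹_› ‹_› hab)
    | exact .inr (.inl (h₁ ‹_› ‹_› hbc)) | exact .inr (.inl (h₂ ‹_› ‹_› hbc))
    | exact .inr (.inr (h₁ ‹_› ‹_› (hab.trans hbc)))
    | exact .inr (.inr (h₂ ‹_› ‹_› (hab.trans hbc)))

theorem exists_injOn_of_vShape (g : ℤ → ℕ) {K r e e' : ℕ} (hr : 0 < r) (he : e = 0 ∨ e' = 0)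
    (h0 : g 0 ≤ K) (hpos : ∀ n : ℕ, g (n + 1) + 2 * e = K + (n + 1) * r)
    (hneg : ∀ n : ℕ, g (-(n + 1)) + 2 * e' = K + (n + 1) * r) :
    ∃ s : Set ℤ, s.InjOn g ∧ sᶜ.InjOn g := by
  have hpos' : ∀ m : ℤ, 0 < m → (g m : ℤ) = K + m * r - 2 * e := by
    intro m hm
    obtain ⟨n, rfl⟩ : ∃ n : ℕ, m = n + 1 := ⟨(m - 1).toNat, by omega⟩
    linarith [hpos n]
  have hneg' : ∀ m : ℤ, m < 0 → (g m : ℤ) = K - m * r - 2 * e' := by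
    intro m hm
    obtain ⟨n, rfl⟩ : ∃ n : ℕ, m = -(n + 1) := ⟨(-m - 1).toNat, by omega⟩
    linarith [hneg n]
  have hr' : (0 : ℤ) < r := by exact_mod_cast hr
  have h0' : (g 0 : ℤ) ≤ K := by exact_mod_cast h0
  have cancel : ∀ a b : ℤ, a * r = b * r → a = b := fun a b h => mul_right_cancel₀ hr'.ne' h
  rcases he with rfl | rfl
  · simp only [Nat.cast_zero, mul_zero, sub_zero] at hpos'
    refine ⟨Iio 0, fun a ha b hb hab => ?_, fun a ha b hb hab => ?_⟩
    · have hab : (g a : ℤ) = g b := by exact_mod_cast hab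
      exact cancel a b (by linarith [hneg' a ha, hneg' b hb])
    · have hab : (g a : ℤ) = g b := by exact_mod_cast hab
      simp only [mem_compl_iff, mem_Iio, not_lt] at ha hb
      rcases ha.eq_or_lt with rfl | ha <;> rcases hb.eq_or_lt with rfl | hb
      · rfl
      · linarith [hpos' b hb, mul_pos hb hr']
      · linarith [hpos' a ha, mul_pos ha hr']
      · exact cancel a b (by linarith [hpos' a ha, hpos' b hb])
  · simp only [Nat.cast_zero, mul_zero, sub_zero] at hneg'
    refine ⟨Ioi 0, fun a ha b hb hab => ?_, fun a ha b hb hab => ?_⟩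
    · have hab : (g a : ℤ) = g b := by exact_mod_cast hab
      exact cancel a b (by linarith [hpos' a ha, hpos' b hb])
    · have hab : (g a : ℤ) = g b := by exact_mod_cast hab
      simp only [mem_compl_iff, mem_Ioi, not_lt] at ha hb
      rcases ha.eq_or_lt with rfl | ha <;> rcases hb.eq_or_lt with rfl | hb
      · rfl
      · linarith [hneg' b hb, mul_neg_of_neg_of_pos hb hr']
      · linarith [hneg' a ha, mul_neg_of_neg_of_pos ha hr']
      · exact cancel a b (by linarith [hneg' a ha, hneg' b hb])

theorem FreeGroup.eq_of_of_mul_of_comm {α : Type*} {x y : α} (h : of x * of y = of y * of x) :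
    x = y := by
  classical
  have hw := congrArg toWord h
  simp only [of, mul_mk, toWord_mk] at hw
  rw [IsReduced.reduce_eq (by simp [isReduced_cons_cons]),
    IsReduced.reduce_eq (by simp [isReduced_cons_cons])] at hw
  exact congrArg Prod.fst (List.cons_eq_cons.1 hw).1

instance FreeGroup.isCyclic_of_subsingleton {α : Type*} [Subsingleton α] :
    IsCyclic (FreeGroup α) := by
  obtain ⟨g, hg⟩ : ∃ g : FreeGroup α, range (of (α := α)) ⊆ {g} := by
    rcases isEmpty_or_nonempty α with hα | ⟨⟨x⟩⟩
    · exact ⟨1, by simp [range_eq_empty]⟩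
    · exact ⟨of x, by rintro _ ⟨y, rfl⟩; rw [Subsingleton.elim y x]; rfl⟩
  refine ⟨g, fun z => ?_⟩
  have : Subgroup.closure (range (of (α := α))) ≤ Subgroup.zpowers g := by
    rw [Subgroup.zpowers_eq_closure]
    exact Subgroup.closure_mono hg
  rw [FreeGroup.closure_range_of] at this
  exact this (Subgroup.mem_top z)

theorem IsFreeGroup.isCyclic_of_isMulCommutative (G : Type*) [Group G] [IsFreeGroup G]
    [IsMulCommutative G] : IsCyclic G := by
  let e := IsFreeGroup.mulEquiv G
  have : Subsingleton (IsFreeGroup.Generators G) := ⟨fun x y =>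
    FreeGroup.eq_of_of_mul_of_comm (e.injective (by rw [map_mul, map_mul, mul_comm']))⟩
  exact isCyclic_of_surjective e.toMonoidHom e.surjective

theorem IsFreeGroup.exists_zpow_eq_of_commute {G : Type*} [Group G] [IsFreeGroup G] {p q : G}
    (h : Commute p q) : ∃ (t : G) (m n : ℤ), t ^ m = p ∧ t ^ n = q := by
  let H := Subgroup.closure ({p, q} : Set G)
  have : IsMulCommutative H := Subgroup.isMulCommutative_closure (by
    simp only [mem_insert_iff, mem_singleton_iff]
    rintro x (rfl | rfl) y (rfl | rfl) <;> first | rfl | exact h | exact h.symm)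
  obtain ⟨t, ht⟩ := isCyclic_of_isMulCommutative H
  obtain ⟨m, hm⟩ := Subgroup.mem_zpowers_iff.1 (ht ⟨p, Subgroup.subset_closure (by simp)⟩)
  obtain ⟨n, hn⟩ := Subgroup.mem_zpowers_iff.1 (ht ⟨q, Subgroup.subset_closure (by simp)⟩)
  exact ⟨t, m, n, congrArg Subtype.val hm, congrArg Subtype.val hn⟩

namespace FreeGroup

variable {α : Type*} {L P Q R W : List (α × Bool)}

theorem IsReduced.invRev (h : IsReduced L) : IsReduced (invRev L) := by
  classical
  rw [← h.reduce_eq, ← toWord_mk, ← toWord_inv]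
  exact isReduced_toWord

theorem IsCyclicallyReduced.invRev (h : IsCyclicallyReduced L) :
    IsCyclicallyReduced (invRev L) := by
  refine ⟨h.isReduced.invRev, fun a ha b hb hab => ?_⟩
  simp only [FreeGroup.invRev, getLast?_reverse, head?_reverse, head?_map, getLast?_map,
    Option.mem_def, Option.map_eq_some_iff] at ha hb
  obtain ⟨x, hx, rfl⟩ := ha
  obtain ⟨y, hy, rfl⟩ := hb
  simpa using (h.2 y hy x hx hab.symm).symm

theorem IsReduced.norm_mk [DecidableEq α] (h : IsReduced L) : norm (mk L) = L.length := by
  rw [norm, toWord_mk, h.reduce_eq]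

theorem IsReduced.mk_injective (h₁ : IsReduced P) (h₂ : IsReduced Q) (h : mk P = mk Q) :
    P = Q := by
  classical
  rw [← h₁.reduce_eq, ← h₂.reduce_eq, ← toWord_mk, h, toWord_mk]

theorem IsReduced.exists_cancel (hP : IsReduced P) (hQ : IsReduced Q) :
    ∃ U E V, P = U ++ E ∧ Q = FreeGroup.invRev E ++ V ∧ IsReduced (U ++ V) := by
  induction P using List.reverseRecOn generalizing Q with
  | nil => exact ⟨[], [], Q, rfl, rfl, hQ⟩
  | append_singleton P x ih =>
    rcases Q with _ | ⟨y, Q⟩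
    · exact ⟨P ++ [x], [], [], (append_nil _).symm, rfl, by simpa using hP⟩
    by_cases hxy : y = (x.1, !x.2)
    · obtain ⟨U, E, V, rfl, rfl, hUV⟩ :=
        ih (hP.infix (prefix_append _ _).isInfix) (hQ.infix (suffix_cons _ _).isInfix)
      exact ⟨U, E ++ [x], V, by simp, by simp [FreeGroup.invRev, hxy], hUV⟩
    · refine ⟨P ++ [x], [], y :: Q, (append_nil _).symm, rfl, ?_⟩
      refine IsReduced.append_overlap (L₂ := [x]) hP ?_ (cons_ne_nil _ _)
      refine isReduced_cons_cons.2 ⟨fun h => ?_, hQ⟩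
      by_contra h'
      exact hxy (Prod.ext h.symm (by revert h'; cases x.2 <;> cases y.2 <;> simp))

theorem exists_conj_isCyclicallyReduced [DecidableEq α] {t : FreeGroup α} (ht : t ≠ 1) :
    ∃ C R : List (α × Bool), t = mk C * mk R * (mk C)⁻¹ ∧ R ≠ [] ∧ IsCyclicallyReduced R ∧
      IsReduced (C ++ R) ∧ IsReduced (C ++ invRev R) := by
  set C := reduceCyclically.conjugator t.toWord
  set R := reduceCyclically t.toWord
  have hL : C ++ R ++ invRev C = t.toWord := reduceCyclically.conj_conjugator_reduceCyclically _
  have htC : t = mk C * mk R * (mk C)⁻¹ := by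
    rw [← mk_toWord (x := t), ← hL, inv_mk, mul_mk, mul_mk]
  have hL' : C ++ invRev R ++ invRev C = t⁻¹.toWord := by
    rw [toWord_inv, ← hL]
    simp [invRev_append, invRev_invRev]
  refine ⟨C, R, htC, fun hR => ?_, reduceCyclically.isCyclicallyReduced isReduced_toWord,
    isReduced_toWord.infix (hL ▸ (prefix_append _ _).isInfix),
    isReduced_toWord.infix (hL' ▸ (prefix_append _ _).isInfix)⟩
  rw [hR, mul_mk, append_nil, mul_inv_cancel] at htC
  exact ht htC

theorem exists_eq_zpow_mul_not_prefix [DecidableEq α] (hR : R ≠ []) (B : FreeGroup α) :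
    ∃ (j : ℤ) (W : List (α × Bool)),
      IsReduced W ∧ B = mk R ^ j * mk W ∧ ¬ R <+: W ∧ ¬ invRev R <+: W := by
  let X : ℤ → FreeGroup α := fun i => mk R ^ (-i) * B
  let j := Function.argmin (norm ∘ X)
  have hmin : ∀ i, norm (X j) ≤ norm (X i) := fun i => Function.argmin_le (norm ∘ X) i
  refine ⟨j, toWord (X j), isReduced_toWord, by rw [mk_toWord]; simp only [X]; group, ?_, ?_⟩
  · rintro ⟨W, hW⟩
    have hX : X (j + 1) = mk W := by
      rw [show X (j + 1) = (mk R)⁻¹ * X j by simp only [X]; group, ← mk_toWord (x := X j),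
        ← hW, ← mul_mk, inv_mul_cancel_left]
    have := hmin (j + 1)
    rw [hX, norm, ← hW, length_append] at this
    linarith [norm_mk_le (L₁ := W), length_pos_iff.2 hR]
  · rintro ⟨W, hW⟩
    have hX : X (j - 1) = mk W := by
      rw [show X (j - 1) = mk R * X j by simp only [X]; group, ← mk_toWord (x := X j), ← hW,
        ← mul_mk, ← inv_mk, mul_inv_cancel_left]
    have := hmin (j - 1)
    rw [hX, norm, ← hW, length_append, invRev_length] at this
    linarith [norm_mk_le (L₁ := W), length_pos_iff.2 hR]

/-- `e` is the number of letters of the last copy of `R` cancelled by `W`. -/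
theorem exists_norm_mk_mul_pow_succ_mul [DecidableEq α] {C : List (α × Bool)}
    (hCR : IsReduced (C ++ R)) (hR : IsCyclicallyReduced R) (hW : IsReduced W)
    (hRW : ¬ invRev R <+: W) :
    ∃ e : ℕ, (e = 0 ∨ ∃ x ∈ R.getLast?, W.head? = some (x.1, !x.2)) ∧
      ∀ n : ℕ, norm (mk C * mk R ^ (n + 1) * mk W) + 2 * e =
        C.length + W.length + (n + 1) * R.length := by
  obtain ⟨U, E, V, rfl, rfl, hUV⟩ := hR.isReduced.exists_cancel hW
  have hU : U ≠ [] := by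
    rintro rfl
    exact hRW ⟨V, by simp⟩
  refine ⟨E.length, ?_, fun n => ?_⟩
  · rcases eq_nil_or_concat' E with rfl | ⟨E, x, rfl⟩
    · exact .inl rfl
    · exact .inr ⟨x, by simp, by simp [FreeGroup.invRev]⟩
  have hmk : mk C * mk (U ++ E) ^ (n + 1) * mk (invRev E ++ V) =
      mk (C ++ (replicate n (U ++ E)).flatten ++ U ++ V) := by
    simp only [← mul_mk, ← inv_mk, ← pow_mk, pow_succ]
    group
  have hred : IsReduced (C ++ (replicate n (U ++ E)).flatten ++ U ++ V) := by
    have hpow := IsReduced.append_flatten_replicate_append (L₃ := []) hR (by simpa using hCR)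
      n.succ_ne_zero
    rw [replicate_succ', flatten_concat, append_nil] at hpow
    exact IsReduced.append_overlap (hpow.infix (IsPrefix.isInfix ⟨E, by simp⟩)) hUV hU
  rw [hmk, hred.norm_mk]
  simp only [length_append, length_flatten, map_replicate, sum_replicate, smul_eq_mul,
    invRev_length]
  ring

theorem exists_injOn_norm_zpow_mul [DecidableEq α] {t : FreeGroup α} (ht : t ≠ 1)
    (A : FreeGroup α) :
    ∃ s : Set ℤ, s.InjOn (fun k => norm (t ^ k * A)) ∧ sᶜ.InjOn (fun k => norm (t ^ k * A)) := by
  obtain ⟨C, R, htC, hR, hRcyc, hCR, hCR'⟩ := exists_conj_isCyclicallyReduced ht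
  obtain ⟨j, W, hW, hA, hRW, hRW'⟩ := exists_eq_zpow_mul_not_prefix hR ((mk C)⁻¹ * A)
  have key : ∀ k : ℤ, t ^ k * A = mk C * mk R ^ (k + j) * mk W := fun k => by
    calc t ^ k * A = mk C * mk R ^ k * ((mk C)⁻¹ * A) := by rw [htC, conj_zpow]; group
      _ = mk C * mk R ^ (k + j) * mk W := by rw [hA, zpow_add]; group
  obtain ⟨e, he, hpos⟩ := exists_norm_mk_mul_pow_succ_mul hCR hRcyc hW hRW'
  obtain ⟨e', he', hneg⟩ :=
    exists_norm_mk_mul_pow_succ_mul hCR' hRcyc.invRev hW (by rwa [invRev_invRev])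
  -- Otherwise `W` would start both with the first letter of `R` and with the inverse of its
  -- last letter, which cannot happen as `R` is cyclically reduced.
  have hee' : e = 0 ∨ e' = 0 := by
    rcases he with he | ⟨x, hx, hWx⟩
    · exact .inl he
    rcases he' with he' | ⟨y, hy, hWy⟩
    · exact .inr he'
    simp only [FreeGroup.invRev, getLast?_reverse, head?_map, Option.mem_map] at hy
    obtain ⟨r, hr, rfl⟩ := hy
    simp only [hWx, Option.some.injEq, Prod.mk.injEq, Bool.not_not] at hWy
    exact (Bool.not_ne_self _ (hWy.2.trans (hRcyc.2 x hx r hr hWy.1).symm)).elim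
  obtain ⟨s, h₁, h₂⟩ := exists_injOn_of_vShape (fun m => norm (mk C * mk R ^ m * mk W))
    (K := C.length + W.length) (length_pos_iff.2 hR) hee'
    (by simpa using (norm_mul_le _ _).trans (add_le_add norm_mk_le norm_mk_le))
    (fun n => by exact_mod_cast hpos n)
    (fun n => by
      have := hneg n
      rw [← inv_mk, inv_pow, ← zpow_natCast, ← zpow_neg, invRev_length] at this
      exact_mod_cast this)
  refine ⟨(· + j) ⁻¹' s, fun a ha b hb hab => ?_, fun a ha b hb hab => ?_⟩
  · simpa using h₁ ha hb (by simpa only [key] using hab)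
  · simpa using h₂ ha hb (by simpa only [key] using hab)

theorem mul_inv_mul_mul_inv_mul_mul_inv_ne_one [DecidableEq α] {a b c : FreeGroup α}
    (hab : a ≠ b) (hac : a ≠ c) (hbc : b ≠ c) (hb : norm b = norm a) (hc : norm c = norm a) :
    a * b⁻¹ * c * a⁻¹ * b * c⁻¹ ≠ 1 := by
  intro h
  have hcomm : Commute (b * a⁻¹) (c * a⁻¹) := by
    have : c * a⁻¹ * (b * a⁻¹) = b * a⁻¹ * (a * b⁻¹ * c * a⁻¹ * b * c⁻¹) * (c * a⁻¹) := by group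
    rw [h, mul_one] at this
    exact this.symm
  obtain ⟨t, m, n, hm, hn⟩ := IsFreeGroup.exists_zpow_eq_of_commute hcomm
  have hb' : b = t ^ m * a := by rw [hm]; group
  have hc' : c = t ^ n * a := by rw [hn]; group
  have ht : t ≠ 1 := by rintro rfl; simp [hb'] at hab
  obtain ⟨s, h₁, h₂⟩ := exists_injOn_norm_zpow_mul ht a
  rcases h₁.eq_or_eq_or_eq_of_compl h₂ (a := 0) (b := m) (c := n)
    (by simp [← hb', hb]) (by simp [← hb', ← hc', hb, hc]) with rfl | rfl | rfl
  · exact hab (by simpa using hb'.symm)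
  · exact hbc (hb'.trans hc'.symm)
  · exact hac (by simpa using hc'.symm)

end FreeGroup
open FreeGroup Relation

namespace MGraph
variable {G : MGraph} {w w' : List G.Dir} {x y z : G.V}

theorem dtail_dinv (d : G.Dir) : G.dtail (G.dinv d) = G.dhead d := by
  cases d with | mk e b => cases b <;> rfl

theorem dhead_dinv (d : G.Dir) : G.dhead (G.dinv d) = G.dtail d := by
  cases d with | mk e b => cases b <;> rfl

theorem nonBack_iff_isReduced : G.NonBack w ↔ IsReduced w := by
  refine IsChain.iff fun a b => ?_
  rcases a with ⟨e, β⟩; rcases b with ⟨e', β'⟩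
  cases β <;> cases β' <;> simp [dinv, eq_comm]

theorem rStep_eq_step : G.RStep = Red.Step := by
  ext w w'
  constructor
  · rintro ⟨L₁, L₂, d, rfl, rfl⟩
    exact Red.Step.not
  · rintro ⟨⟩
    exact ⟨_, _, (_, _), rfl, rfl⟩

theorem reflTransGen_rStep_iff_red : ReflTransGen G.RStep w w' ↔ Red w w' := by
  rw [rStep_eq_step]; rfl

theorem IsWalk.invRev (h : G.IsWalk w) : G.IsWalk (invRev w) := by
  rw [IsWalk, Chain', FreeGroup.invRev, isChain_reverse, isChain_map]
  exact h.imp fun a b hab => by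
    change G.dhead (G.dinv b) = G.dtail (G.dinv a)
    rw [dhead_dinv, dtail_dinv, hab]

theorem wstart_invRev (w : List G.Dir) : G.wstart (invRev w) = G.wend w := by
  simp only [wstart, wend, FreeGroup.invRev, head?_reverse, getLast?_map, Option.map_map]
  congr 1
  funext d
  exact G.dtail_dinv d

theorem wend_invRev (w : List G.Dir) : G.wend (invRev w) = G.wstart w := by
  simpa only [invRev_invRev] using (G.wstart_invRev (invRev w)).symm

theorem IsWalk.red_step (hw : G.IsWalk w) (h : Red.Step w w') : G.IsWalk w' := by
  cases h with | @not L₁ L₂ x b =>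
  have hd : G.dhead (x, !b) = G.dtail (x, b) := G.dhead_dinv (x, b)
  simp only [IsWalk, Chain', isChain_append, isChain_cons, head?_cons, Option.mem_some_iff]
    at hw ⊢
  obtain ⟨h₁, ⟨-, h₂, h₃⟩, h₄⟩ := hw
  exact ⟨h₁, h₃, fun a ha c hc => by rw [h₄ a ha _ rfl, ← hd, h₂ c hc]⟩

theorem wstart_red_step (hw : G.IsWalk w) (h : Red.Step w w') (hne : w' ≠ []) :
    G.wstart w' = G.wstart w := by
  cases h with | @not L₁ L₂ x b =>
  rcases L₁ with _ | ⟨d, L₁⟩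
  · obtain ⟨c, L₂, rfl⟩ := exists_cons_of_ne_nil hne
    have hc : G.dhead (x, !b) = G.dtail c := (isChain_cons_cons.1 (isChain_cons_cons.1 hw).2).1
    simp only [wstart, nil_append, head?_cons, Option.map_some, ← hc]
    exact congrArg some (G.dhead_dinv (x, b))
  · rfl

-- Such a walk is nonempty, as `wstart [] = none`.
def IsWalkFrom (G : MGraph) (x y : G.V) (w : List G.Dir) : Prop :=
  G.IsWalk w ∧ G.wstart w = some x ∧ G.wend w = some y

theorem IsWalkFrom.append {w₁ w₂ : List G.Dir} (h₁ : G.IsWalkFrom x y w₁)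
    (h₂ : G.IsWalkFrom y z w₂) : G.IsWalkFrom x z (w₁ ++ w₂) := by
  obtain ⟨hw₁, hs₁, he₁⟩ := h₁
  obtain ⟨hw₂, hs₂, he₂⟩ := h₂
  rcases eq_nil_or_concat' w₁ with rfl | ⟨w₁, a, rfl⟩
  · simp [wstart] at hs₁
  rcases w₂ with _ | ⟨c, w₂⟩
  · simp [wstart] at hs₂
  simp only [wend, getLast?_concat, Option.map_some, Option.some.injEq] at he₁
  simp only [wstart, head?_cons, Option.map_some, Option.some.injEq] at hs₂
  refine ⟨isChain_append.2 ⟨hw₁, hw₂, by simp [he₁, hs₂]⟩, ?_, ?_⟩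
  · simpa [wstart, head?_append] using hs₁
  · simpa [wend] using he₂

theorem IsWalkFrom.invRev (h : G.IsWalkFrom x y w) : G.IsWalkFrom y x (invRev w) :=
  ⟨h.1.invRev, by rw [wstart_invRev, h.2.2], by rw [wend_invRev, h.2.1]⟩

theorem IsWalkFrom.red_step (hw : G.IsWalkFrom x y w) (h : Red.Step w w') (hne : w' ≠ []) :
    G.IsWalkFrom x y w' := by
  refine ⟨hw.1.red_step h, by rw [wstart_red_step hw.1 h hne, hw.2.1], ?_⟩
  have hne' : FreeGroup.invRev w' ≠ [] := by simpa [FreeGroup.invRev] using hne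
  rw [← wstart_invRev, wstart_red_step hw.1.invRev h.invRev hne', wstart_invRev, hw.2.2]

theorem IsWalkFrom.red (hw : G.IsWalkFrom x y w) (h : Red w w') (hne : w' ≠ []) :
    G.IsWalkFrom x y w' := by
  induction h with
  | refl => exact hw
  | tail _ hstep ih =>
    refine (ih ?_).red_step hstep hne
    rintro rfl
    simpa using hstep.length

theorem cnt_append (w₁ w₂ : List G.Dir) (d : G.Dir) :
    G.cnt (w₁ ++ w₂) d = G.cnt w₁ d + G.cnt w₂ d := by
  simp only [cnt, count_append]

theorem cnt_invRev (w : List G.Dir) (e : G.E) (b : Bool) :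
    G.cnt (invRev w) (e, b) = G.cnt w (e, !b) := by
  have hb : ((e, b) : G.Dir) = G.dinv (e, !b) := by simp [dinv]
  let := Classical.decEq G.Dir
  simp only [cnt]
  rw [FreeGroup.invRev, count_reverse, hb]
  exact count_map_of_injective _ _ (fun d d' h => by simpa [dinv] using congrArg G.dinv h) _

theorem EdgeNeutral.red_step (hw : G.EdgeNeutral w) (h : Red.Step w w') : G.EdgeNeutral w' := by
  cases h with | @not L₁ L₂ x b =>
  have hpair : G.EdgeNeutral [(x, b), (x, !b)] := by
    intro e
    by_cases he : e = x
    · subst he; cases b <;> simp [cnt]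
    · simp [cnt, Ne.symm he]
  intro e
  have h₁ := hw e
  have h₂ := hpair e
  rw [show L₁ ++ (x, b) :: (x, !b) :: L₂ = L₁ ++ [(x, b), (x, !b)] ++ L₂ by simp] at h₁
  simp only [cnt_append] at h₁ h₂ ⊢
  omega

theorem EdgeNeutral.red (hw : G.EdgeNeutral w) (h : Red w w') : G.EdgeNeutral w' := by
  induction h with
  | refl => exact hw
  | tail _ hstep ih => exact ih.red_step hstep

theorem ablGirth_le_length (hw : G.IsWalk w) (hnb : G.NonBack w) (hc : G.Closed w)
    (hn : G.EdgeNeutral w) : G.ablGirth ≤ w.length :=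
  sInf_le ⟨w, hw, hnb, hc, hn, rfl⟩

theorem IsWalkFrom.exists_nonBack_of_mk_ne_one [DecidableEq G.E] (hw : G.IsWalkFrom x x w)
    (hn : G.EdgeNeutral w) (h1 : FreeGroup.mk w ≠ 1) :
    ∃ w', G.IsWalk w' ∧ G.NonBack w' ∧ G.Closed w' ∧ G.EdgeNeutral w' ∧
      w'.length ≤ w.length ∧ ¬ ReflTransGen G.RStep w' [] := by
  have hred : Red w (reduce w) := reduce.red
  have hne : reduce w ≠ [] := fun h => h1 (by rw [← reduce.self, h]; rfl)
  have hreduced : IsReduced (reduce w) := isReduced_iff_reduce_eq.2 reduce.idem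
  obtain ⟨hwalk, hs, he⟩ := hw.red hred hne
  refine ⟨reduce w, hwalk, nonBack_iff_isReduced.2 hreduced, ⟨hne, hs.trans he.symm⟩,
    hn.red hred, hred.length_le, ?_⟩
  rw [reflTransGen_rStep_iff_red, hreduced.red_iff_eq]
  exact hne ∘ Eq.symm

end MGraph

/-- If a graph has three pairwise distinct non-backtracking walks of the same
length `h` from `v` to `u`, then it has a nontrivial closed edge-neutral walk
of length at most `6h` whose reduction is nontrivial; consequently its abelian
girth is at most `6h`. -/
theorem ablGirth_le_six_h (G : MGraph) (v u : G.V) (h : ℕ)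
    (w₁ w₂ w₃ : List G.Dir)
    (hw₁ : G.IsWalk w₁ ∧ G.NonBack w₁ ∧ G.wstart w₁ = some v ∧
      G.wend w₁ = some u ∧ w₁.length = h)
    (hw₂ : G.IsWalk w₂ ∧ G.NonBack w₂ ∧ G.wstart w₂ = some v ∧
      G.wend w₂ = some u ∧ w₂.length = h)
    (hw₃ : G.IsWalk w₃ ∧ G.NonBack w₃ ∧ G.wstart w₃ = some v ∧
      G.wend w₃ = some u ∧ w₃.length = h)
    (h12 : w₁ ≠ w₂) (h13 : w₁ ≠ w₃) (h23 : w₂ ≠ w₃) :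
    (∃ ℓ : List G.Dir, G.IsWalk ℓ ∧ G.Closed ℓ ∧ G.EdgeNeutral ℓ ∧
      ℓ.length ≤ 6 * h ∧ ¬ Relation.ReflTransGen G.RStep ℓ []) ∧
      G.ablGirth ≤ ((6 * h : ℕ) : ℕ∞) := by
  classical
  obtain ⟨hwalk₁, hnb₁, hs₁, he₁, hl₁⟩ := hw₁
  obtain ⟨hwalk₂, hnb₂, hs₂, he₂, hl₂⟩ := hw₂
  obtain ⟨hwalk₃, hnb₃, hs₃, he₃, hl₃⟩ := hw₃
  set ℓ₀ := w₁ ++ invRev w₂ ++ w₃ ++ invRev w₁ ++ w₂ ++ invRev w₃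
  have hwalk : G.IsWalkFrom v v ℓ₀ := by
    have a : G.IsWalkFrom v u w₁ := ⟨hwalk₁, hs₁, he₁⟩
    have b : G.IsWalkFrom v u w₂ := ⟨hwalk₂, hs₂, he₂⟩
    have c : G.IsWalkFrom v u w₃ := ⟨hwalk₃, hs₃, he₃⟩
    exact ((((a.append b.invRev).append c).append a.invRev).append b).append c.invRev
  have hneutral : G.EdgeNeutral ℓ₀ := fun e => by
    simp only [ℓ₀, MGraph.cnt_append, MGraph.cnt_invRev, Bool.not_true, Bool.not_false]
    omega
  have hmk : mk ℓ₀ ≠ 1 := by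
    have hr₁ := MGraph.nonBack_iff_isReduced.1 hnb₁
    have hr₂ := MGraph.nonBack_iff_isReduced.1 hnb₂
    have hr₃ := MGraph.nonBack_iff_isReduced.1 hnb₃
    simp only [ℓ₀, ← mul_mk, ← inv_mk]
    exact mul_inv_mul_mul_inv_mul_mul_inv_ne_one (mt (hr₁.mk_injective hr₂) h12)
      (mt (hr₁.mk_injective hr₃) h13) (mt (hr₂.mk_injective hr₃) h23)
      (by rw [hr₁.norm_mk, hr₂.norm_mk, hl₁, hl₂]) (by rw [hr₁.norm_mk, hr₃.norm_mk, hl₁, hl₃])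
  obtain ⟨ℓ, hℓ, hnb, hclosed, hn, hlen, hnr⟩ := hwalk.exists_nonBack_of_mk_ne_one hneutral hmk
  have hlen' : ℓ.length ≤ 6 * h :=
    hlen.trans (by simp only [ℓ₀, length_append, invRev_length]; omega)
  exact ⟨⟨ℓ, hℓ, hclosed, hn, hlen', hnr⟩,
    (MGraph.ablGirth_le_length hℓ hnb hclosed hn).trans (by exact_mod_cast hlen')⟩
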